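/- Let H be a real inner product space, m ≥ 1, u_1, …, u_m ∈ H, and U the Gram matrix U_{ij} = (1/m)⟨u_i, u_j⟩, with eigenvalues λ_1 ≥ λ_2 ≥ … ≥ λ_m listed with multiplicity in decreasing order. Then for every n with 1 ≤ n ≤ m and every orthonormal family ψ_1, …, ψ_n ∈ H, the mean-square reconstruction error of the snapshot ensemble is bounded below by the sum of the discarded eigenvalues: (1/m) Σ_{k=1}^m ‖u_k − Σ_{i=1}^n ⟨u_k, ψ_i⟩ ψ_i‖² ≥ Σ_{ℓ=n+1}^m λ_ℓ. -/

import Mathlib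

open RealInnerProductSpace Matrix Finset

/-!
Mixing the snapshots by the orthogonal matrix of eigenvectors, `w ℓ = ∑ k, c ℓ k • u k`, changes
neither their total energy nor the energy captured by `span ψ`, hence not the reconstruction
error, and the mixed snapshots are pairwise orthogonal with `‖w ℓ‖² = m λ_ℓ`. For orthogonal
snapshots the captured energy is `∑ ℓ, ‖w ℓ‖² t ℓ`, where `t ℓ ∈ [0, 1]` is the squared length of
the projection of `w ℓ / ‖w ℓ‖` onto `span ψ`, and `∑ ℓ, t ℓ ≤ n` by Bessel's inequality for the
`w ℓ / ‖w ℓ‖` applied to each `ψ i`. Since `‖w ℓ‖²` decreases, such a weighted sum is at most the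
sum of the first `n` weights.
-/

theorem sum_mul_le_sum_of_threshold {ι : Type*} [Fintype ι] [DecidableEq ι] {μ t : ι → ℝ}
    {s : Finset ι} {θ : ℝ} (hθ : 0 ≤ θ) (hs : ∀ ℓ ∈ s, θ ≤ μ ℓ) (hsc : ∀ ℓ ∉ s, μ ℓ ≤ θ)
    (ht0 : ∀ ℓ, 0 ≤ t ℓ) (ht1 : ∀ ℓ, t ℓ ≤ 1) (hsum : ∑ ℓ, t ℓ ≤ #s) :
    ∑ ℓ, μ ℓ * t ℓ ≤ ∑ ℓ ∈ s, μ ℓ := by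
  have hterm : ∀ ℓ, μ ℓ * t ℓ + θ * ((if ℓ ∈ s then 1 else 0) - t ℓ) ≤
      if ℓ ∈ s then μ ℓ else 0 := by
    intro ℓ
    split_ifs with h
    · nlinarith [hs ℓ h, ht1 ℓ]
    · nlinarith [hsc ℓ h, ht0 ℓ]
  calc ∑ ℓ, μ ℓ * t ℓ ≤ ∑ ℓ, μ ℓ * t ℓ + θ * (#s - ∑ ℓ, t ℓ) :=
        le_add_of_nonneg_right (mul_nonneg hθ (sub_nonneg.2 hsum))
    _ = ∑ ℓ, (μ ℓ * t ℓ + θ * ((if ℓ ∈ s then 1 else 0) - t ℓ)) := by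
        rw [sum_add_distrib, ← mul_sum, sum_sub_distrib, sum_boole, filter_mem_eq_inter, univ_inter]
    _ ≤ ∑ ℓ, if ℓ ∈ s then μ ℓ else 0 := sum_le_sum fun ℓ _ => hterm ℓ
    _ = ∑ ℓ ∈ s, μ ℓ := by simp [sum_ite_mem]

theorem Fin.sum_mul_le_sum_val_lt_of_antitone {m n : ℕ} (hnm : n ≤ m) {μ t : Fin m → ℝ}
    (hμ : Antitone μ) (hμ0 : ∀ ℓ, 0 ≤ μ ℓ) (ht0 : ∀ ℓ, 0 ≤ t ℓ) (ht1 : ∀ ℓ, t ℓ ≤ 1)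
    (hsum : ∑ ℓ, t ℓ ≤ n) :
    ∑ ℓ, μ ℓ * t ℓ ≤ ∑ ℓ ∈ univ.filter (fun ℓ : Fin m => (ℓ : ℕ) < n), μ ℓ := by
  have hcard : (#{ℓ : Fin m | (ℓ : ℕ) < n} : ℝ) = n := by
    rw [Fin.card_filter_val_lt, min_eq_right hnm]
  rcases hnm.lt_or_eq with hlt | rfl
  · refine sum_mul_le_sum_of_threshold (hμ0 ⟨n, hlt⟩) (fun ℓ hℓ => hμ ?_) (fun ℓ hℓ => hμ ?_)
      ht0 ht1 (hcard ▸ hsum)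
    · simp only [mem_filter, mem_univ, true_and] at hℓ
      exact Fin.mk_le_of_le_val hℓ.le
    · simp only [mem_filter, mem_univ, true_and, not_lt] at hℓ
      exact Fin.le_def.2 hℓ
  · refine sum_mul_le_sum_of_threshold le_rfl (fun ℓ _ => hμ0 ℓ) (fun ℓ hℓ => ?_)
      ht0 ht1 (hcard ▸ hsum)
    simp at hℓ

section InnerProductSpace

variable {H : Type*} [NormedAddCommGroup H] [InnerProductSpace ℝ H] {ι : Type*} [Fintype ι]

theorem norm_sub_sum_inner_div_smul_sq {w : ι → H} (hw : Pairwise fun i j => ⟪w i, w j⟫ = 0)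
    (x : H) :
    ‖x - ∑ i, (⟪w i, x⟫ / ‖w i‖ ^ 2) • w i‖ ^ 2 = ‖x‖ ^ 2 - ∑ i, ⟪w i, x⟫ ^ 2 / ‖w i‖ ^ 2 := by
  set y := ∑ i, (⟪w i, x⟫ / ‖w i‖ ^ 2) • w i
  have hwy : ∀ i, ⟪w i, y⟫ = ⟪w i, x⟫ := by
    intro i
    rw [inner_sum, sum_eq_single i (fun j _ hji => by rw [real_inner_smul_right, hw hji.symm,
      mul_zero]) (by simp), real_inner_smul_right, real_inner_self_eq_norm_sq]
    rcases eq_or_ne (w i) 0 with h | h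
    · simp [h]
    · exact div_mul_cancel₀ _ (by positivity)
  have hyx : ⟪y, x⟫ = ∑ i, ⟪w i, x⟫ ^ 2 / ‖w i‖ ^ 2 := by
    simp only [y, sum_inner, real_inner_smul_left]
    exact sum_congr rfl fun i _ => by ring
  have hyy : ⟪y, y⟫ = ⟪y, x⟫ := by
    simp only [y, sum_inner, real_inner_smul_left, hwy]
  rw [norm_sub_sq_real, ← real_inner_self_eq_norm_sq y, hyy, real_inner_comm, hyx]
  ring

theorem sum_inner_sq_div_norm_sq_le {w : ι → H} (hw : Pairwise fun i j => ⟪w i, w j⟫ = 0)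
    (x : H) : ∑ i, ⟪w i, x⟫ ^ 2 / ‖w i‖ ^ 2 ≤ ‖x‖ ^ 2 :=
  sub_nonneg.1 (norm_sub_sum_inner_div_smul_sq hw x ▸ sq_nonneg _)

theorem Orthonormal.norm_sub_sum_inner_smul_sq {ψ : ι → H} (hψ : Orthonormal ℝ ψ) (x : H) :
    ‖x - ∑ i, ⟪x, ψ i⟫ • ψ i‖ ^ 2 = ‖x‖ ^ 2 - ∑ i, ⟪x, ψ i⟫ ^ 2 := by
  simpa [hψ.1, real_inner_comm] using
    norm_sub_sum_inner_div_smul_sq (fun i j h => hψ.inner_eq_zero h) x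

theorem Orthonormal.sum_inner_sq_le {ψ : ι → H} (hψ : Orthonormal ℝ ψ) (x : H) :
    ∑ i, ⟪x, ψ i⟫ ^ 2 ≤ ‖x‖ ^ 2 :=
  sub_nonneg.1 (hψ.norm_sub_sum_inner_smul_sq x ▸ sq_nonneg _)

theorem real_inner_sum_smul_sum_smul (u : ι → H) (x y : ι → ℝ) :
    ⟪∑ k, x k • u k, ∑ k, y k • u k⟫ = x ⬝ᵥ gram ℝ u *ᵥ y := by
  rw [← star_dotProduct_gram_mulVec, star_trivial]

theorem sum_norm_sq_sum_smul_of_transpose_mul_self {κ : Type*} [Fintype κ] [DecidableEq ι]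
    {C : Matrix κ ι ℝ} (hC : Cᵀ * C = 1) (u : ι → H) :
    ∑ ℓ, ‖∑ k, C ℓ k • u k‖ ^ 2 = ∑ k, ‖u k‖ ^ 2 := by
  have hrow : ∀ ℓ, ‖∑ k, C ℓ k • u k‖ ^ 2 = (C * gram ℝ u * Cᵀ) ℓ ℓ := by
    intro ℓ
    rw [← real_inner_self_eq_norm_sq, real_inner_sum_smul_sum_smul, Matrix.mul_assoc]
    simp [mul_apply, dotProduct, mulVec, mul_sum]
  calc ∑ ℓ, ‖∑ k, C ℓ k • u k‖ ^ 2 = trace (C * gram ℝ u * Cᵀ) := sum_congr rfl fun ℓ _ => hrow ℓ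
    _ = trace (gram ℝ u) := by rw [trace_mul_cycle, hC, one_mul]
    _ = ∑ k, ‖u k‖ ^ 2 := sum_congr rfl fun k _ => real_inner_self_eq_norm_sq (u k)

theorem Orthonormal.sum_norm_sub_sum_inner_smul_sq_of_transpose_mul_self {κ ν : Type*}
    [Fintype κ] [Fintype ν] [DecidableEq ι] {ψ : ν → H} (hψ : Orthonormal ℝ ψ)
    {C : Matrix κ ι ℝ} (hC : Cᵀ * C = 1) (u : ι → H) :
    ∑ ℓ, ‖∑ k, C ℓ k • u k - ∑ i, ⟪∑ k, C ℓ k • u k, ψ i⟫ • ψ i‖ ^ 2 =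
      ∑ k, ‖u k - ∑ i, ⟪u k, ψ i⟫ • ψ i‖ ^ 2 := by
  have hcoeff : ∀ i, ∑ ℓ, ⟪∑ k, C ℓ k • u k, ψ i⟫ ^ 2 = ∑ k, ⟪u k, ψ i⟫ ^ 2 := by
    intro i
    simpa [sum_inner, real_inner_smul_left, Real.norm_eq_abs, sq_abs] using
      sum_norm_sq_sum_smul_of_transpose_mul_self hC fun k => ⟪u k, ψ i⟫
  simp only [hψ.norm_sub_sum_inner_smul_sq, sum_sub_distrib,
    sum_norm_sq_sum_smul_of_transpose_mul_self hC u]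
  rw [sum_comm, sum_congr rfl fun i _ => hcoeff i, sum_comm]

theorem Orthonormal.sum_sum_inner_sq_le_sum_val_lt {m n : ℕ} (hnm : n ≤ m) {w : Fin m → H}
    (hw : Pairwise fun ℓ q => ⟪w ℓ, w q⟫ = 0) (hanti : Antitone fun ℓ => ‖w ℓ‖ ^ 2)
    {ψ : Fin n → H} (hψ : Orthonormal ℝ ψ) :
    ∑ ℓ, ∑ i, ⟪w ℓ, ψ i⟫ ^ 2 ≤ ∑ ℓ ∈ univ.filter (fun ℓ : Fin m => (ℓ : ℕ) < n), ‖w ℓ‖ ^ 2 := by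
  set t : Fin m → ℝ := fun ℓ => (∑ i, ⟪w ℓ, ψ i⟫ ^ 2) / ‖w ℓ‖ ^ 2
  have hmass : ∀ ℓ, ∑ i, ⟪w ℓ, ψ i⟫ ^ 2 = ‖w ℓ‖ ^ 2 * t ℓ := by
    intro ℓ
    rcases eq_or_ne (w ℓ) 0 with h | h
    · simp [h]
    · exact (mul_div_cancel₀ _ (by positivity)).symm
  have ht1 : ∀ ℓ, t ℓ ≤ 1 := fun ℓ => div_le_one_of_le₀ (hψ.sum_inner_sq_le (w ℓ)) (sq_nonneg _)
  have hsum : ∑ ℓ, t ℓ ≤ n :=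
    calc ∑ ℓ, t ℓ = ∑ i, ∑ ℓ, ⟪w ℓ, ψ i⟫ ^ 2 / ‖w ℓ‖ ^ 2 := by
          simp only [t, sum_div]; exact sum_comm
      _ ≤ ∑ i, ‖ψ i‖ ^ 2 := sum_le_sum fun i _ => sum_inner_sq_div_norm_sq_le hw (ψ i)
      _ = n := by simp [hψ.1]
  simp only [hmass]
  exact Fin.sum_mul_le_sum_val_lt_of_antitone hnm hanti (fun ℓ => sq_nonneg _)
    (fun ℓ => by positivity) ht1 hsum

theorem Orthonormal.sum_val_ge_norm_sq_le_sum_norm_sub_sum_inner_smul_sq {m n : ℕ} (hnm : n ≤ m)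
    {w : Fin m → H} (hw : Pairwise fun ℓ q => ⟪w ℓ, w q⟫ = 0)
    (hanti : Antitone fun ℓ => ‖w ℓ‖ ^ 2) {ψ : Fin n → H} (hψ : Orthonormal ℝ ψ) :
    ∑ ℓ ∈ univ.filter (fun ℓ : Fin m => n ≤ (ℓ : ℕ)), ‖w ℓ‖ ^ 2 ≤
      ∑ ℓ, ‖w ℓ - ∑ i, ⟪w ℓ, ψ i⟫ • ψ i‖ ^ 2 := by
  have hsplit := sum_filter_add_sum_filter_not univ (fun ℓ : Fin m => (ℓ : ℕ) < n)
    fun ℓ => ‖w ℓ‖ ^ 2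
  simp only [not_lt] at hsplit
  simp only [hψ.norm_sub_sum_inner_smul_sq, sum_sub_distrib]
  linarith [hψ.sum_sum_inner_sq_le_sum_val_lt hnm hw hanti]

end InnerProductSpace

theorem reconstruction_error_ge_sum_discarded_eigenvalues_general
    {H : Type*} [NormedAddCommGroup H] [InnerProductSpace ℝ H]
    (m : ℕ) (hm : 1 ≤ m) (u : Fin m → H)
    (U : Matrix (Fin m) (Fin m) ℝ)
    (hU : ∀ i j, U i j = (1 / (m : ℝ)) * ⟪u i, u j⟫)
    (c : Fin m → Fin m → ℝ) (lam : Fin m → ℝ)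
    (horth : ∀ ℓ q, c ℓ ⬝ᵥ c q = if ℓ = q then 1 else 0)
    (heig : ∀ ℓ, U.mulVec (c ℓ) = lam ℓ • c ℓ)
    (hdecr : ∀ i j : Fin m, i ≤ j → lam j ≤ lam i)
    (n : ℕ) (hnm : n ≤ m)
    (ψ : Fin n → H)
    (hψ : ∀ i j, ⟪ψ i, ψ j⟫ = if i = j then 1 else 0) :
    (1 / (m : ℝ)) * ∑ k, ‖u k - ∑ i, ⟪u k, ψ i⟫ • ψ i‖ ^ 2
      ≥ ∑ ℓ ∈ Finset.univ.filter (fun ℓ : Fin m => n ≤ (ℓ : ℕ)), lam ℓ := by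
  have hψ' : Orthonormal ℝ ψ := orthonormal_iff_ite.2 hψ
  set w : Fin m → H := fun ℓ => ∑ k, c ℓ k • u k
  have hC : (of c)ᵀ * of c = 1 :=
    mul_eq_one_comm.1 <| Matrix.ext fun ℓ q => by rw [mul_apply', one_apply]; exact horth ℓ q
  have hm0 : (m : ℝ) ≠ 0 := Nat.cast_ne_zero.2 (Nat.one_le_iff_ne_zero.1 hm)
  have hUgram : gram ℝ u = (m : ℝ) • U := Matrix.ext fun i j => by simp [hU, hm0]
  have hgram : ∀ ℓ q, ⟪w ℓ, w q⟫ = m * (lam q * if ℓ = q then 1 else 0) := fun ℓ q => by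
    rw [real_inner_sum_smul_sum_smul, hUgram, smul_mulVec, dotProduct_smul, heig,
      dotProduct_smul, horth, smul_eq_mul, smul_eq_mul]
  have hw : Pairwise fun ℓ q => ⟪w ℓ, w q⟫ = 0 := fun ℓ q h => by simp [hgram, h]
  have hnorm : ∀ ℓ, ‖w ℓ‖ ^ 2 = m * lam ℓ := fun ℓ => by
    rw [← real_inner_self_eq_norm_sq, hgram]; simp
  have hanti : Antitone fun ℓ => ‖w ℓ‖ ^ 2 := fun i j hij => by
    simp only [hnorm]; gcongr; exact hdecr i j hij
  calc ∑ ℓ ∈ univ.filter (fun ℓ : Fin m => n ≤ (ℓ : ℕ)), lam ℓ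
      = 1 / m * ∑ ℓ ∈ univ.filter (fun ℓ : Fin m => n ≤ (ℓ : ℕ)), ‖w ℓ‖ ^ 2 := by
        simp [hnorm, mul_sum, hm0]
    _ ≤ 1 / m * ∑ ℓ, ‖w ℓ - ∑ i, ⟪w ℓ, ψ i⟫ • ψ i‖ ^ 2 := by
        gcongr
        exact hψ'.sum_val_ge_norm_sq_le_sum_norm_sub_sum_inner_smul_sq hnm hw hanti
    _ = 1 / m * ∑ k, ‖u k - ∑ i, ⟪u k, ψ i⟫ • ψ i‖ ^ 2 := by
        congr 1
        exact hψ'.sum_norm_sub_sum_inner_smul_sq_of_transpose_mul_self hC u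

/-- Reconstruction-error lower bound: if the Gram matrix
`U_{ij} = (1/m)⟨u_i, u_j⟩` has an orthonormal eigenbasis with eigenvalues
`λ_1 ≥ … ≥ λ_m` listed in decreasing order, then for every `n` with
`1 ≤ n ≤ m` and every orthonormal family `ψ_1, …, ψ_n` in `H`, the mean-square
reconstruction error is at least the sum of the discarded eigenvalues:
`(1/m) Σ_k ‖u_k − Σ_i ⟨u_k, ψ_i⟩ ψ_i‖² ≥ Σ_{ℓ=n+1}^m λ_ℓ`. -/
theorem reconstruction_error_ge_sum_discarded_eigenvalues
    {H : Type*} [NormedAddCommGroup H] [InnerProductSpace ℝ H]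
    (m : ℕ) (hm : 1 ≤ m) (u : Fin m → H)
    (U : Matrix (Fin m) (Fin m) ℝ)
    (hU : ∀ i j, U i j = (1 / (m : ℝ)) * ⟪u i, u j⟫)
    (c : Fin m → Fin m → ℝ) (lam : Fin m → ℝ)
    (horth : ∀ ℓ q, c ℓ ⬝ᵥ c q = if ℓ = q then 1 else 0)
    (heig : ∀ ℓ, U.mulVec (c ℓ) = lam ℓ • c ℓ)
    (hdecr : ∀ i j : Fin m, i ≤ j → lam j ≤ lam i)
    (n : ℕ) (hn : 1 ≤ n) (hnm : n ≤ m)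
    (ψ : Fin n → H)
    (hψ : ∀ i j, ⟪ψ i, ψ j⟫ = if i = j then 1 else 0) :
    (1 / (m : ℝ)) * ∑ k, ‖u k - ∑ i, ⟪u k, ψ i⟫ • ψ i‖ ^ 2
      ≥ ∑ ℓ ∈ Finset.univ.filter (fun ℓ : Fin m => n ≤ (ℓ : ℕ)), lam ℓ :=
  reconstruction_error_ge_sum_discarded_eigenvalues_general m hm u U hU c lam horth heig hdecr n hnm
    ψ hψ
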